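/- arXiv:2505.03706 — 4 statements merged into one kernel-verified Lean document; each statement's English description precedes it below -/
import Mathlib

section
/- Suppose the data matrix D_{0,t} has full row rank m+n, so Φ_t = D_{0,t}D_{0,t}ᵀ/t is positive definite, and let [B̂_t, Â_t] = X_{1,t}D_{0,t}ᵀ(D_{0,t}D_{0,t}ᵀ)^{-1} be the ordinary least-squares estimate of [B, A]. If γ_t > 0 satisfies σ_min(Φ_t) ≥ γ_t and δ_t = ‖W_{0,t}D_{0,t}ᵀ‖/t, then the estimation error satisfies ‖[B̂_t, Â_t] − [B, A]‖ ≤ δ_t/γ_t, i.e. the error is at most 1/SNR_t where SNR_t = γ_t/δ_t. -/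
open Matrix

noncomputable def spNorm {α β : Type*} [Fintype α] [Fintype β] [DecidableEq β]
    (M : Matrix α β ℝ) : ℝ :=
  ‖LinearMap.toContinuousLinearMap (Matrix.toEuclideanLin M)‖

noncomputable def sigMin {α β : Type*} [Fintype α] [Fintype β] [DecidableEq β]
    (M : Matrix α β ℝ) : ℝ :=
  sInf ((fun x : EuclideanSpace ℝ β =>
    ‖LinearMap.toContinuousLinearMap (Matrix.toEuclideanLin M) x‖) '' {x | ‖x‖ = 1})

/-!
Since `X₁ = [B, A] D₀ + W₀`, the least-squares error is
`W₀ D₀ᵀ (D₀ D₀ᵀ)⁻¹ = (W₀ D₀ᵀ / t) Φ⁻¹`, whose spectral norm is at most `δ ‖Φ⁻¹‖`.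
The lower bound `‖Φ x‖ ≥ σ_min(Φ) ‖x‖`, applied to `x = Φ⁻¹ y`, gives `‖Φ⁻¹‖ ≤ 1 / γ`.
`Φ` is positive definite because `D₀ D₀ᵀ` is positive semidefinite of full rank
`rank D₀ = m + n`.
-/

open scoped Matrix.Norms.L2Operator ComplexOrder

namespace Matrix

variable {ι κ ν : Type*} [Fintype ι]

theorem isUnit_of_rank_eq_card {K : Type*} [Field K] [DecidableEq ι] {A : Matrix ι ι K}
    (h : A.rank = Fintype.card ι) : IsUnit A := by
  have hrange : LinearMap.range A.mulVecLin = ⊤ :=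
    Submodule.eq_top_of_finrank_eq (by rwa [Module.finrank_fintype_fun_eq_card])
  exact mulVec_surjective_iff_isUnit.mp (LinearMap.range_eq_top.mp hrange)

theorem posDef_self_mul_conjTranspose_of_rank_eq_card {𝕜 : Type*} [RCLike 𝕜] [Fintype κ]
    [DecidableEq ι] {D : Matrix ι κ 𝕜} (h : D.rank = Fintype.card ι) : (D * Dᴴ).PosDef :=
  (posSemidef_self_mul_conjTranspose D).posDef_iff_isUnit.mpr
    (isUnit_of_rank_eq_card (by rwa [rank_self_mul_conjTranspose]))

theorem leastSquares_error_eq {R : Type*} [CommRing R] [Fintype ν] [DecidableEq ι]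
    (Θ : Matrix κ ι R) (D : Matrix ι ν R) (W : Matrix κ ν R) (hD : IsUnit (D * Dᵀ).det) :
    (Θ * D + W) * Dᵀ * (D * Dᵀ)⁻¹ - Θ = W * Dᵀ * (D * Dᵀ)⁻¹ := by
  rw [Matrix.add_mul, Matrix.add_mul, Matrix.mul_assoc Θ, Matrix.mul_assoc Θ,
    mul_nonsing_inv _ hD, Matrix.mul_one, add_sub_cancel_left]

theorem mul_inv_eq_smul_mul_inv_smul {K : Type*} [Field K] [DecidableEq ι] {c : K} (hc : c ≠ 0)
    (N : Matrix κ ι K) {G : Matrix ι ι K} (hG : IsUnit G.det) :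
    N * G⁻¹ = (c • N) * (c • G)⁻¹ := by
  rw [show c • G = Units.mk0 c hc • G from rfl, inv_smul' G _ hG, Units.smul_def,
    Matrix.smul_mul, Matrix.mul_smul, smul_smul, Units.val_inv_eq_inv_val, Units.val_mk0,
    mul_inv_cancel₀ hc, one_smul]

end Matrix

section SpectralNorm

variable {ι κ : Type*} [Fintype ι]

theorem spNorm_eq_l2_opNorm [Fintype κ] [DecidableEq κ] (M : Matrix ι κ ℝ) :
    spNorm M = ‖M‖ := rfl

theorem mul_norm_le_of_le_sigMin [Fintype κ] [DecidableEq κ] {M : Matrix ι κ ℝ} {γ : ℝ}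
    (h : γ ≤ sigMin M) (x : EuclideanSpace ℝ κ) :
    γ * ‖x‖ ≤ ‖toEuclideanLin M x‖ := by
  rcases eq_or_ne x 0 with rfl | hx
  · simp
  have hx' : 0 < ‖x‖ := norm_pos_iff.mpr hx
  have hunit : ‖‖x‖⁻¹ • x‖ = 1 := by
    rw [norm_smul, norm_inv, norm_norm, inv_mul_cancel₀ hx'.ne']
  have hbdd : BddBelow ((fun y : EuclideanSpace ℝ κ =>
      ‖LinearMap.toContinuousLinearMap (toEuclideanLin M) y‖) '' {y | ‖y‖ = 1}) :=
    ⟨0, by rintro _ ⟨y, -, rfl⟩; exact norm_nonneg _⟩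
  have hle := h.trans (csInf_le hbdd ⟨_, hunit, rfl⟩)
  simp only [LinearMap.coe_toContinuousLinearMap', map_smul, norm_smul, norm_inv, norm_norm] at hle
  rwa [le_inv_mul_iff₀ hx', mul_comm] at hle

theorem norm_inv_le_of_le_sigMin [DecidableEq ι] {M : Matrix ι ι ℝ} (hM : IsUnit M.det)
    {γ : ℝ} (hγ : 0 < γ) (h : γ ≤ sigMin M) : ‖M⁻¹‖ ≤ γ⁻¹ := by
  rw [l2_opNorm_def]
  refine ContinuousLinearMap.opNorm_le_bound _ (inv_nonneg.mpr hγ.le) fun y => ?_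
  have hy : toEuclideanLin M (toEuclideanLin M⁻¹ y) = y := by
    simp [toLpLin_apply, mulVec_mulVec, mul_nonsing_inv _ hM]
  have := mul_norm_le_of_le_sigMin h (toEuclideanLin M⁻¹ y)
  rw [hy] at this
  rw [le_inv_mul_iff₀ hγ]
  simpa using this

end SpectralNorm

/-- Lemma 1: the ordinary least-squares estimation error is bounded by the
inverse signal-to-noise ratio `δ/γ`. -/
theorem ols_estimation_error {n m t : ℕ} (ht : 0 < t)
    (A : Matrix (Fin n) (Fin n) ℝ) (B : Matrix (Fin n) (Fin m) ℝ)
    (X0 : Matrix (Fin n) (Fin t) ℝ) (U0 : Matrix (Fin m) (Fin t) ℝ)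
    (W0 X1 : Matrix (Fin n) (Fin t) ℝ)
    (hdyn : X1 = A * X0 + B * U0 + W0)
    (D0 : Matrix (Fin m ⊕ Fin n) (Fin t) ℝ) (hD0 : D0 = fromRows U0 X0)
    (hrank : D0.rank = m + n)
    (Φ : Matrix (Fin m ⊕ Fin n) (Fin m ⊕ Fin n) ℝ)
    (hΦ : Φ = ((t : ℝ)⁻¹) • (D0 * D0ᵀ))
    (γ δ : ℝ) (hγ : 0 < γ) (hsig : γ ≤ sigMin Φ)
    (hδ : δ = (t : ℝ)⁻¹ * spNorm (W0 * D0ᵀ))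
    (BAh : Matrix (Fin n) (Fin m ⊕ Fin n) ℝ)
    (hBAh : BAh = X1 * D0ᵀ * (D0 * D0ᵀ)⁻¹) :
    Φ.PosDef ∧ spNorm (BAh - fromCols B A) ≤ δ / γ := by
  have htR : (0 : ℝ) < t := Nat.cast_pos.mpr ht
  have ht' : (0 : ℝ) < (t : ℝ)⁻¹ := inv_pos.mpr htR
  have hG : (D0 * D0ᵀ).PosDef := by
    simpa only [conjTranspose_eq_transpose_of_trivial] using
      posDef_self_mul_conjTranspose_of_rank_eq_card (𝕜 := ℝ) (by simpa [add_comm] using hrank)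
  have hΦpd : Φ.PosDef := hΦ ▸ hG.smul ht'
  refine ⟨hΦpd, ?_⟩
  have hX1 : X1 = fromCols B A * D0 + W0 := by
    rw [hdyn, hD0, fromCols_mul_fromRows, add_comm (A * X0)]
  have hErr : BAh - fromCols B A = ((t : ℝ)⁻¹ • (W0 * D0ᵀ)) * Φ⁻¹ := by
    have hGdet : IsUnit (D0 * D0ᵀ).det := hG.det_pos.ne'.isUnit
    rw [hBAh, hX1, leastSquares_error_eq _ _ _ hGdet, hΦ,
      mul_inv_eq_smul_mul_inv_smul ht'.ne' _ hGdet]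
  rw [hErr, hδ, spNorm_eq_l2_opNorm, spNorm_eq_l2_opNorm, div_eq_mul_inv]
  calc ‖(t : ℝ)⁻¹ • (W0 * D0ᵀ) * Φ⁻¹‖
      ≤ ‖(t : ℝ)⁻¹ • (W0 * D0ᵀ)‖ * ‖Φ⁻¹‖ := l2_opNorm_mul _ _
    _ ≤ (t : ℝ)⁻¹ * ‖W0 * D0ᵀ‖ * γ⁻¹ := by
      rw [norm_smul, Real.norm_of_nonneg ht'.le]
      gcongr
      exact norm_inv_le_of_le_sigMin hΦpd.det_pos.ne'.isUnit hγ hsig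
end

section
/- Perturbation bound for the discrete Lyapunov equation: let A ∈ ℝ^{n×n} have spectral radius ρ(A) < 1 and let Σ(A) be the unique positive definite solution of Σ(A) = I_n + AΣ(A)Aᵀ. If A' ∈ ℝ^{n×n} satisfies ‖A' − A‖ ≤ 1/(4‖Σ(A)‖(1 + ‖A‖)), then ρ(A') < 1 and ‖Σ(A') − Σ(A)‖ ≤ 4‖Σ(A)‖²(1 + ‖A‖)‖A' − A‖, where Σ(A') is the unique positive definite solution of Σ(A') = I_n + A'Σ(A')A'ᵀ. -/
open Matrix

noncomputable def frobNorm {α β : Type*} [Fintype α] [Fintype β] (M : Matrix α β ℝ) : ℝ :=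
  Real.sqrt (∑ i, ∑ j, (M i j) ^ 2)

noncomputable def frobInner {α β : Type*} [Fintype α] [Fintype β] (X Y : Matrix α β ℝ) : ℝ :=
  (Xᵀ * Y).trace

noncomputable def vecNorm {α : Type*} [Fintype α] (v : α → ℝ) : ℝ :=
  Real.sqrt (∑ i, (v i) ^ 2)

/-- spectral radius strictly less than one (Schur stability). -/
def IsStable {n : ℕ} (M : Matrix (Fin n) (Fin n) ℝ) : Prop :=
  ∀ μ ∈ spectrum ℂ (M.map (algebraMap ℝ ℂ)), ‖μ‖ < 1

def Controllable {n m : ℕ} (A : Matrix (Fin n) (Fin n) ℝ) (B : Matrix (Fin n) (Fin m) ℝ) :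
    Prop :=
  Function.Surjective fun v : Fin n × Fin m → ℝ =>
    Matrix.mulVec (Matrix.of fun i p => (A ^ (p.1 : ℕ) * B) i p.2) v

noncomputable def dlyap {n : ℕ} (M : Matrix (Fin n) (Fin n) ℝ) :
    Matrix (Fin n) (Fin n) ℝ :=
  ∑' i : ℕ, M ^ i * (M ^ i)ᵀ

noncomputable def dlyapQ {n : ℕ} (M Qc : Matrix (Fin n) (Fin n) ℝ) :
    Matrix (Fin n) (Fin n) ℝ :=
  ∑' i : ℕ, (M ^ i)ᵀ * Qc * M ^ i

noncomputable def SigmaK {n m : ℕ} (A : Matrix (Fin n) (Fin n) ℝ)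
    (B : Matrix (Fin n) (Fin m) ℝ) (K : Matrix (Fin m) (Fin n) ℝ) :
    Matrix (Fin n) (Fin n) ℝ :=
  dlyap (A + B * K)

noncomputable def PmatK {n m : ℕ} (A : Matrix (Fin n) (Fin n) ℝ)
    (B : Matrix (Fin n) (Fin m) ℝ) (Q : Matrix (Fin n) (Fin n) ℝ)
    (R : Matrix (Fin m) (Fin m) ℝ) (K : Matrix (Fin m) (Fin n) ℝ) :
    Matrix (Fin n) (Fin n) ℝ :=
  dlyapQ (A + B * K) (Q + Kᵀ * R * K)

noncomputable def costC {n m : ℕ} (A : Matrix (Fin n) (Fin n) ℝ)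
    (B : Matrix (Fin n) (Fin m) ℝ) (Q : Matrix (Fin n) (Fin n) ℝ)
    (R : Matrix (Fin m) (Fin m) ℝ) (K : Matrix (Fin m) (Fin n) ℝ) : ℝ :=
  ((Q + Kᵀ * R * K) * SigmaK A B K).trace

noncomputable def gradC {n m : ℕ} (A : Matrix (Fin n) (Fin n) ℝ)
    (B : Matrix (Fin n) (Fin m) ℝ) (Q : Matrix (Fin n) (Fin n) ℝ)
    (R : Matrix (Fin m) (Fin m) ℝ) (K : Matrix (Fin m) (Fin n) ℝ) :
    Matrix (Fin m) (Fin n) ℝ :=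
  (2 : ℝ) • (((R + Bᵀ * PmatK A B Q R K * B) * K + Bᵀ * PmatK A B Q R K * A) * SigmaK A B K)

def StronglyStable {n m : ℕ} (A : Matrix (Fin n) (Fin n) ℝ) (B : Matrix (Fin n) (Fin m) ℝ)
    (K : Matrix (Fin m) (Fin n) ℝ) (κ α : ℝ) : Prop :=
  1 ≤ κ ∧ 0 < α ∧ α ≤ 1 ∧
    ∃ H L : Matrix (Fin n) (Fin n) ℝ, H.PosDef ∧
      A + B * K = H * L * H⁻¹ ∧ spNorm L ≤ 1 - α ∧ spNorm H * spNorm H⁻¹ ≤ κ ∧ spNorm K ≤ κ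

def SeqStable {n m : ℕ} (A : Matrix (Fin n) (Fin n) ℝ) (B : Matrix (Fin n) (Fin m) ℝ)
    (K : ℕ → Matrix (Fin m) (Fin n) ℝ) (t0 : ℕ) (κ α : ℝ) : Prop :=
  1 ≤ κ ∧ 0 < α ∧ α ≤ 1 ∧
    ∃ H L : ℕ → Matrix (Fin n) (Fin n) ℝ,
      ∀ t, t0 ≤ t → (H t).PosDef ∧ A + B * K t = H t * L t * (H t)⁻¹ ∧
        spNorm (L t) ≤ 1 - α ∧ spNorm (K t) ≤ κ ∧ spNorm (H t) ≤ κ ∧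
        spNorm (H t)⁻¹ ≤ 1 ∧ spNorm ((H (t + 1))⁻¹ * H t) ≤ 1 + α / 2

noncomputable def D0mat {n m : ℕ} (u : ℕ → Fin m → ℝ) (x : ℕ → Fin n → ℝ) (t : ℕ) :
    Matrix (Fin m ⊕ Fin n) (Fin t) ℝ :=
  Matrix.of fun i j => Sum.elim (fun a => u (j : ℕ) a) (fun b => x (j : ℕ) b) i

noncomputable def X1mat {n : ℕ} (x : ℕ → Fin n → ℝ) (t : ℕ) : Matrix (Fin n) (Fin t) ℝ :=
  Matrix.of fun i j => x ((j : ℕ) + 1) i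

noncomputable def W0mat {n : ℕ} (w : ℕ → Fin n → ℝ) (t : ℕ) : Matrix (Fin n) (Fin t) ℝ :=
  Matrix.of fun i j => w (j : ℕ) i

noncomputable def Phimat {n m : ℕ} (u : ℕ → Fin m → ℝ) (x : ℕ → Fin n → ℝ) (t : ℕ) :
    Matrix (Fin m ⊕ Fin n) (Fin m ⊕ Fin n) ℝ :=
  ((t : ℝ)⁻¹) • (D0mat u x t * (D0mat u x t)ᵀ)

noncomputable def BAhat {n m : ℕ} (u : ℕ → Fin m → ℝ) (x : ℕ → Fin n → ℝ) (t : ℕ) :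
    Matrix (Fin n) (Fin m ⊕ Fin n) ℝ :=
  X1mat x t * (D0mat u x t)ᵀ * (D0mat u x t * (D0mat u x t)ᵀ)⁻¹

noncomputable def Bhat {n m : ℕ} (u : ℕ → Fin m → ℝ) (x : ℕ → Fin n → ℝ) (t : ℕ) :
    Matrix (Fin n) (Fin m) ℝ :=
  Matrix.of fun i j => BAhat u x t i (Sum.inl j)

noncomputable def Ahat {n m : ℕ} (u : ℕ → Fin m → ℝ) (x : ℕ → Fin n → ℝ) (t : ℕ) :
    Matrix (Fin n) (Fin n) ℝ :=
  Matrix.of fun i j => BAhat u x t i (Sum.inr j)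

noncomputable def deltaT {n m : ℕ} (w : ℕ → Fin n → ℝ) (u : ℕ → Fin m → ℝ)
    (x : ℕ → Fin n → ℝ) (t : ℕ) : ℝ :=
  (t : ℝ)⁻¹ * spNorm (W0mat w t * (D0mat u x t)ᵀ)

noncomputable def SNR {n m : ℕ} (γ : ℕ → ℝ) (w : ℕ → Fin n → ℝ) (u : ℕ → Fin m → ℝ)
    (x : ℕ → Fin n → ℝ) (t : ℕ) : ℝ :=
  γ t / deltaT w u x t

/-!
Write `Σ(a) = ∑ₖ aᵏ (aᵏ)*` and `S = Σ(A)`, so that `S = 1 + A S Aᵀ` and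
`⟪S x, x⟫ = ∑ₖ ‖(Aᵏ)ᵀ x‖² ≥ ‖x‖²`. Under the hypothesis, `E = A' S A'ᵀ - A S Aᵀ` has norm at
most `1/2`, hence `⟪S A'ᵀx, A'ᵀx⟫ = ⟪S x, x⟫ - ‖x‖² + ⟪E x, x⟫ ≤ (1 - 1/(2‖S‖)) ⟪S x, x⟫`:
`S` is a Lyapunov function for `A'`, so `‖A'ᵏ‖² ≤ ‖S‖ (1 - 1/(2‖S‖))ᵏ` and `A'` is stable.
Moreover `Σ(A') - S = ∑ₖ A'ᵏ E (A'ᵏ)ᵀ`, whose quadratic form is bounded by `‖E‖ ⟪Σ(A') x, x⟫`;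
thus `‖Σ(A') - S‖ ≤ ‖E‖ (‖S‖ + ‖Σ(A') - S‖)`, i.e. `‖Σ(A') - S‖ ≤ 2 ‖E‖ ‖S‖`.

Stability is equivalent to square-summability of `‖Aᵏ‖`, by Gelfand's formula applied to the
complexification of `A`.
-/

open Filter Topology

section LyapunovSum

variable {R : Type*}

noncomputable def lyapunovSum [Semiring R] [Star R] [TopologicalSpace R] (a q : R) : R :=
  ∑' k : ℕ, a ^ k * q * star (a ^ k)

variable [NormedRing R] [StarRing R] [NormedStarGroup R]

lemma norm_pow_mul_mul_star_pow_le (a q : R) (k : ℕ) :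
    ‖a ^ k * q * star (a ^ k)‖ ≤ ‖q‖ * ‖a ^ k‖ ^ 2 := by
  calc ‖a ^ k * q * star (a ^ k)‖ ≤ ‖a ^ k‖ * ‖q‖ * ‖star (a ^ k)‖ := norm_mul₃_le
    _ = ‖q‖ * ‖a ^ k‖ ^ 2 := by rw [norm_star]; ring

lemma norm_conj_sub_conj_le (a b s : R) :
    ‖b * s * star b - a * s * star a‖ ≤ ‖s‖ * ‖b - a‖ * (2 * ‖a‖ + ‖b - a‖) := by
  have hb : ‖b‖ ≤ ‖a‖ + ‖b - a‖ := by simpa using norm_add_le a (b - a)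
  calc ‖b * s * star b - a * s * star a‖
      = ‖(b - a) * s * star b + a * s * star (b - a)‖ := by rw [star_sub]; noncomm_ring
    _ ≤ ‖b - a‖ * ‖s‖ * ‖b‖ + ‖a‖ * ‖s‖ * ‖b - a‖ := by
      grw [norm_add_le, norm_mul₃_le, norm_mul₃_le, norm_star, norm_star]
    _ ≤ ‖b - a‖ * ‖s‖ * (‖a‖ + ‖b - a‖) + ‖a‖ * ‖s‖ * ‖b - a‖ := by gcongr
    _ = ‖s‖ * ‖b - a‖ * (2 * ‖a‖ + ‖b - a‖) := by ring

lemma star_lyapunovSum (a q : R) : star (lyapunovSum a q) = lyapunovSum a (star q) := by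
  rw [lyapunovSum, tsum_star, lyapunovSum]
  simp only [star_mul, star_star, mul_assoc]

variable [CompleteSpace R] {a : R}

lemma summable_pow_mul_mul_star_pow (ha : Summable fun k ↦ ‖a ^ k‖ ^ 2) (q : R) :
    Summable fun k : ℕ ↦ a ^ k * q * star (a ^ k) :=
  .of_norm_bounded (ha.mul_left ‖q‖) (norm_pow_mul_mul_star_pow_le a q)

lemma lyapunovSum_eq_add (ha : Summable fun k ↦ ‖a ^ k‖ ^ 2) (q : R) :
    lyapunovSum a q = q + a * lyapunovSum a q * star a := by
  have hs := summable_pow_mul_mul_star_pow ha q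
  calc lyapunovSum a q = q + ∑' k : ℕ, a ^ (k + 1) * q * star (a ^ (k + 1)) := by
        rw [lyapunovSum, hs.tsum_eq_zero_add, pow_zero, star_one, one_mul, mul_one]
    _ = q + a * lyapunovSum a q * star a := by
        rw [lyapunovSum, ← hs.tsum_mul_left, ← (hs.mul_left a).tsum_mul_right]
        simp only [pow_succ', star_mul, mul_assoc]

lemma eq_lyapunovSum_of_eq_add (ha : Summable fun k ↦ ‖a ^ k‖ ^ 2) {q x : R}
    (hx : x = q + a * x * star a) : x = lyapunovSum a q := by
  set d := x - lyapunovSum a q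
  have hd₁ : d = a * d * star a := by
    simp only [d]; nth_rewrite 1 [hx, lyapunovSum_eq_add ha q]; noncomm_ring
  have hd : ∀ k : ℕ, d = a ^ k * d * star (a ^ k) := by
    intro k
    induction k with
    | zero => simp
    | succ k ih =>
      calc d = a ^ k * (a * d * star a) * star (a ^ k) := by rw [← hd₁, ← ih]
        _ = a ^ (k + 1) * d * star (a ^ (k + 1)) := by rw [pow_succ, star_mul]; noncomm_ring
  have hlim : Tendsto (fun k ↦ ‖d‖ * ‖a ^ k‖ ^ 2) atTop (𝓝 0) := by
    simpa using ha.tendsto_atTop_zero.const_mul ‖d‖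
  have : ‖d‖ ≤ 0 := ge_of_tendsto' hlim fun k ↦ by
    nth_rewrite 1 [hd k]; exact norm_pow_mul_mul_star_pow_le a d k
  exact sub_eq_zero.mp (norm_le_zero_iff.mp this)

lemma map_lyapunovSum {S F : Type*} [Semiring S] [Star S] [TopologicalSpace S] [T2Space S]
    [FunLike F R S] [RingHomClass F R S] [StarHomClass F R S] (φ : F) (hφ : Continuous φ)
    (ha : Summable fun k ↦ ‖a ^ k‖ ^ 2) (q : R) :
    φ (lyapunovSum a q) = lyapunovSum (φ a) (φ q) := by
  rw [lyapunovSum, (summable_pow_mul_mul_star_pow ha q).map_tsum φ hφ, lyapunovSum]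
  simp only [map_mul, map_pow, map_star]

lemma lyapunovSum_sub_lyapunovSum {b : R} (ha : Summable fun k ↦ ‖a ^ k‖ ^ 2)
    (hb : Summable fun k ↦ ‖b ^ k‖ ^ 2) :
    lyapunovSum b 1 - lyapunovSum a 1 =
      lyapunovSum b (b * lyapunovSum a 1 * star b - a * lyapunovSum a 1 * star a) := by
  set S := lyapunovSum a 1
  set E := b * S * star b - a * S * star a
  have hS : S = 1 + a * S * star a := lyapunovSum_eq_add ha 1
  have hG := lyapunovSum_eq_add hb E
  rw [sub_eq_iff_eq_add', eq_comm]
  refine eq_lyapunovSum_of_eq_add hb ?_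
  set G := lyapunovSum b E
  calc S + G = (1 + a * S * star a) + (E + b * G * star b) := by rw [← hS, ← hG]
    _ = 1 + b * (S + G) * star b := by simp only [E]; noncomm_ring

end LyapunovSum

namespace ContinuousLinearMap

open scoped RealInnerProductSpace

variable {H : Type*} [NormedAddCommGroup H] [InnerProductSpace ℝ H]

lemma abs_inner_apply_self_le (Q : H →L[ℝ] H) (x : H) : |⟪Q x, x⟫| ≤ ‖Q‖ * ‖x‖ ^ 2 := by
  grw [abs_real_inner_le_norm, le_opNorm]
  exact le_of_eq (by ring)

lemma norm_le_of_abs_inner_apply_self_le {G : H →L[ℝ] H} (hG : (G : H →ₗ[ℝ] H).IsSymmetric)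
    {c : ℝ} (hc : 0 ≤ c) (h : ∀ x, |⟪G x, x⟫| ≤ c * ‖x‖ ^ 2) : ‖G‖ ≤ c := by
  rw [G.norm_eq_iSup_rayleighQuotient hG]
  refine ciSup_le fun x ↦ ?_
  rcases eq_or_ne x 0 with rfl | hx
  · simpa using hc
  rw [rayleighQuotient, reApplyInnerSelf_apply, RCLike.re_to_real, abs_div, abs_sq,
    div_le_iff₀ (by positivity)]
  exact h x

variable [CompleteSpace H]

lemma inner_conj_apply_self (A Q : H →L[ℝ] H) (x : H) :
    ⟪(A * Q * star A) x, x⟫ = ⟪Q (star A x), star A x⟫ := by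
  rw [mul_apply_eq_comp, mul_apply_eq_comp, star_eq_adjoint, ← adjoint_inner_right]

lemma norm_pow_sq_le_of_inner_star_apply_le {P T : H →L[ℝ] H} {ρ : ℝ} (hρ : 0 ≤ ρ)
    (hP : ∀ x, ‖x‖ ^ 2 ≤ ⟪P x, x⟫) (hT : ∀ x, ⟪P (star T x), star T x⟫ ≤ ρ * ⟪P x, x⟫)
    (k : ℕ) : ‖T ^ k‖ ^ 2 ≤ ‖P‖ * ρ ^ k := by
  have hiter : ∀ k : ℕ, ∀ x, ⟪P (star (T ^ k) x), star (T ^ k) x⟫ ≤ ρ ^ k * ⟪P x, x⟫ := by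
    intro k
    induction k with
    | zero => simp
    | succ k ih =>
      intro x
      rw [pow_succ T, star_mul, mul_apply_eq_comp, pow_succ' ρ, mul_assoc]
      exact (hT _).trans (mul_le_mul_of_nonneg_left (ih x) hρ)
  have hsa : (((T ^ k) * star (T ^ k) : H →L[ℝ] H) : H →ₗ[ℝ] H).IsSymmetric :=
    (IsSelfAdjoint.mul_star_self (T ^ k)).isSymmetric
  rw [sq, ← CStarRing.norm_self_mul_star]
  refine norm_le_of_abs_inner_apply_self_le hsa (by positivity) fun x ↦ ?_
  have hx : ⟪(T ^ k * star (T ^ k)) x, x⟫ = ‖star (T ^ k) x‖ ^ 2 := by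
    rw [mul_apply_eq_comp, star_eq_adjoint, ← adjoint_inner_right,
      real_inner_self_eq_norm_sq]
  rw [hx, abs_sq]
  calc ‖star (T ^ k) x‖ ^ 2 ≤ ρ ^ k * ⟪P x, x⟫ := (hP _).trans (hiter k x)
    _ ≤ ρ ^ k * (‖P‖ * ‖x‖ ^ 2) := by grw [le_abs_self ⟪P x, x⟫, abs_inner_apply_self_le]
    _ = ‖P‖ * ρ ^ k * ‖x‖ ^ 2 := by ring

variable {T : H →L[ℝ] H}

lemma hasSum_inner_lyapunovSum_apply_self (hT : Summable fun k ↦ ‖T ^ k‖ ^ 2)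
    (Q : H →L[ℝ] H) (x : H) :
    HasSum (fun k : ℕ ↦ ⟪Q (star (T ^ k) x), star (T ^ k) x⟫) ⟪lyapunovSum T Q x, x⟫ := by
  have := (summable_pow_mul_mul_star_pow hT Q).hasSum.mapL ((innerSL ℝ x).comp (apply ℝ H x))
  simp only [comp_apply, apply_apply, innerSL_apply_apply, ← real_inner_comm x,
    inner_conj_apply_self] at this
  exact this

lemma norm_sq_le_inner_lyapunovSum_one (hT : Summable fun k ↦ ‖T ^ k‖ ^ 2) (x : H) :
    ‖x‖ ^ 2 ≤ ⟪lyapunovSum T 1 x, x⟫ := by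
  simpa [real_inner_self_eq_norm_sq] using
    le_hasSum (hasSum_inner_lyapunovSum_apply_self hT 1 x) 0 fun k _ ↦ real_inner_self_nonneg

lemma abs_inner_lyapunovSum_apply_self_le (hT : Summable fun k ↦ ‖T ^ k‖ ^ 2)
    (Q : H →L[ℝ] H) (x : H) :
    |⟪lyapunovSum T Q x, x⟫| ≤ ‖Q‖ * ⟪lyapunovSum T 1 x, x⟫ := by
  have hQ := hasSum_inner_lyapunovSum_apply_self hT Q x
  have h1 := (hasSum_inner_lyapunovSum_apply_self hT 1 x).mul_left ‖Q‖
  have hterm (k : ℕ) : |⟪Q (star (T ^ k) x), star (T ^ k) x⟫| ≤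
      ‖Q‖ * ⟪(1 : H →L[ℝ] H) (star (T ^ k) x), star (T ^ k) x⟫ := by
    rw [one_apply_eq_self, real_inner_self_eq_norm_sq]
    exact abs_inner_apply_self_le Q _
  exact abs_le.mpr ⟨hasSum_le (fun k ↦ neg_le_of_abs_le (hterm k)) h1.neg hQ,
    hasSum_le (fun k ↦ le_of_abs_le (hterm k)) hQ h1⟩

lemma norm_lyapunovSum_le (hT : Summable fun k ↦ ‖T ^ k‖ ^ 2) {Q : H →L[ℝ] H}
    (hQ : IsSelfAdjoint Q) : ‖lyapunovSum T Q‖ ≤ ‖Q‖ * ‖lyapunovSum T 1‖ := by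
  have hsa : IsSelfAdjoint (lyapunovSum T Q) := by
    rw [IsSelfAdjoint, star_lyapunovSum, hQ.star_eq]
  refine norm_le_of_abs_inner_apply_self_le hsa.isSymmetric (by positivity) fun x ↦ ?_
  calc _ ≤ ‖Q‖ * ⟪lyapunovSum T 1 x, x⟫ := abs_inner_lyapunovSum_apply_self_le hT Q x
    _ ≤ ‖Q‖ * (‖lyapunovSum T 1‖ * ‖x‖ ^ 2) := by
      grw [le_abs_self ⟪lyapunovSum T 1 x, x⟫, abs_inner_apply_self_le]
    _ = _ := by ring

lemma one_le_norm_lyapunovSum_one [Nontrivial H] (hT : Summable fun k ↦ ‖T ^ k‖ ^ 2) :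
    1 ≤ ‖lyapunovSum T 1‖ := by
  obtain ⟨x, hx⟩ := exists_ne (0 : H)
  have h := (norm_sq_le_inner_lyapunovSum_one hT x).trans
    ((le_abs_self _).trans (abs_inner_apply_self_le _ x))
  exact le_of_mul_le_mul_right (by simpa using h) (by positivity)

lemma inner_star_apply_le_of_eq_one_add_conj {S T' : H →L[ℝ] H} (hS : S = 1 + T * S * star T)
    (hE : ‖T' * S * star T' - T * S * star T‖ ≤ 1 / 2) (x : H) :
    ⟪S (star T' x), star T' x⟫ ≤ (1 - 1 / (2 * ‖S‖)) * ⟪S x, x⟫ := by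
  set E := T' * S * star T' - T * S * star T
  have hconj : T' * S * star T' = S - 1 + E := by
    calc T' * S * star T' = (1 + T * S * star T) - 1 + E := by simp only [E]; abel
      _ = S - 1 + E := by rw [← hS]
  have hSx : ⟪S x, x⟫ ≤ ‖S‖ * ‖x‖ ^ 2 := (le_abs_self _).trans (abs_inner_apply_self_le S x)
  have hEx : ⟪E x, x⟫ ≤ ‖x‖ ^ 2 / 2 := by
    grw [le_abs_self ⟪E x, x⟫, abs_inner_apply_self_le, hE]
    exact le_of_eq (by ring)
  have hquad : 1 / (2 * ‖S‖) * ⟪S x, x⟫ ≤ ‖x‖ ^ 2 / 2 := by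
    grw [hSx]
    rcases (norm_nonneg S).eq_or_lt with h | h
    · rw [← h]; simp; positivity
    · field_simp; rfl
  rw [← inner_conj_apply_self, hconj, _root_.add_apply, _root_.sub_apply, one_apply_eq_self,
    inner_add_left, inner_sub_left, real_inner_self_eq_norm_sq]
  linarith

variable {T' : H →L[ℝ] H}

lemma summable_norm_pow_sq_of_norm_conj_sub_le (hT : Summable fun k ↦ ‖T ^ k‖ ^ 2)
    (hE : ‖T' * lyapunovSum T 1 * star T' - T * lyapunovSum T 1 * star T‖ ≤ 1 / 2) :
    Summable fun k ↦ ‖T' ^ k‖ ^ 2 := by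
  nontriviality H
  set S := lyapunovSum T 1
  have hS : 1 ≤ ‖S‖ := one_le_norm_lyapunovSum_one hT
  have hρ₀ : 0 ≤ 1 - 1 / (2 * ‖S‖) := by
    rw [sub_nonneg, div_le_one (by positivity)]; linarith
  have hρ₁ : 1 - 1 / (2 * ‖S‖) < 1 := sub_lt_self 1 (by positivity)
  refine .of_nonneg_of_le (fun k ↦ by positivity) (norm_pow_sq_le_of_inner_star_apply_le hρ₀
    (norm_sq_le_inner_lyapunovSum_one hT)
    (inner_star_apply_le_of_eq_one_add_conj (lyapunovSum_eq_add hT 1) hE))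
    ((summable_geometric_of_lt_one hρ₀ hρ₁).mul_left _)

lemma norm_lyapunovSum_sub_le (hT : Summable fun k ↦ ‖T ^ k‖ ^ 2)
    (hT' : Summable fun k ↦ ‖T' ^ k‖ ^ 2)
    (hE : ‖T' * lyapunovSum T 1 * star T' - T * lyapunovSum T 1 * star T‖ ≤ 1 / 2) :
    ‖lyapunovSum T' 1 - lyapunovSum T 1‖ ≤
      2 * ‖T' * lyapunovSum T 1 * star T' - T * lyapunovSum T 1 * star T‖ *
        ‖lyapunovSum T 1‖ := by
  set S := lyapunovSum T 1
  set E := T' * S * star T' - T * S * star T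
  have hSsa : IsSelfAdjoint S := by rw [IsSelfAdjoint, star_lyapunovSum, star_one]
  have hG : ‖lyapunovSum T' 1 - S‖ ≤ ‖E‖ * (‖S‖ + ‖lyapunovSum T' 1 - S‖) := by
    calc ‖lyapunovSum T' 1 - S‖ ≤ ‖E‖ * ‖lyapunovSum T' 1‖ := by
          rw [lyapunovSum_sub_lyapunovSum hT hT']
          exact norm_lyapunovSum_le hT' ((hSsa.conjugate T').sub (hSsa.conjugate T))
      _ ≤ ‖E‖ * (‖S‖ + ‖lyapunovSum T' 1 - S‖) := by
          gcongr; exact norm_le_insert' _ _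
  nlinarith [norm_nonneg E, norm_nonneg (lyapunovSum T' 1 - S)]

theorem lyapunovSum_perturbation (hT : Summable fun k ↦ ‖T ^ k‖ ^ 2)
    (hpert : ‖T' - T‖ ≤ 1 / (4 * ‖lyapunovSum T 1‖ * (1 + ‖T‖))) :
    (Summable fun k ↦ ‖T' ^ k‖ ^ 2) ∧
      ‖lyapunovSum T' 1 - lyapunovSum T 1‖ ≤
        4 * ‖lyapunovSum T 1‖ ^ 2 * (1 + ‖T‖) * ‖T' - T‖ := by
  nontriviality H
  set S := lyapunovSum T 1
  have hS : 1 ≤ ‖S‖ := one_le_norm_lyapunovSum_one hT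
  have hδ : 4 * ‖S‖ * (1 + ‖T‖) * ‖T' - T‖ ≤ 1 := by
    rwa [le_div_iff₀ (by positivity), mul_comm] at hpert
  have hδ₂ : ‖T' - T‖ ≤ 2 := by
    have : 4 ≤ 4 * ‖S‖ * (1 + ‖T‖) := by nlinarith [norm_nonneg T]
    nlinarith [norm_nonneg (T' - T)]
  have hE : ‖T' * S * star T' - T * S * star T‖ ≤ 2 * ‖S‖ * (1 + ‖T‖) * ‖T' - T‖ :=
    calc _ ≤ ‖S‖ * ‖T' - T‖ * (2 * ‖T‖ + ‖T' - T‖) := norm_conj_sub_conj_le T T' S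
      _ ≤ ‖S‖ * ‖T' - T‖ * (2 * ‖T‖ + 2) := by gcongr
      _ = 2 * ‖S‖ * (1 + ‖T‖) * ‖T' - T‖ := by ring
  have hE' : ‖T' * S * star T' - T * S * star T‖ ≤ 1 / 2 := by linarith
  have hT' := summable_norm_pow_sq_of_norm_conj_sub_le hT hE'
  refine ⟨hT', (norm_lyapunovSum_sub_le hT hT' hE').trans ?_⟩
  grw [hE]
  exact le_of_eq (by ring)

end ContinuousLinearMap

open scoped NNReal Matrix.Norms.L2Operator

namespace spectrum

variable {A : Type*} [NormedRing A] [CompleteSpace A]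

lemma eventually_norm_pow_le_of_spectralRadius_lt [NormedAlgebra ℂ A] {a : A} {r : ℝ≥0}
    (h : spectralRadius ℂ a < r) : ∀ᶠ k in atTop, ‖a ^ k‖ ≤ (r : ℝ) ^ k := by
  filter_upwards [(pow_norm_pow_one_div_tendsto_nhds_spectralRadius a).eventually (gt_mem_nhds h),
    eventually_gt_atTop 0] with k hk hk₀
  rw [ENNReal.ofReal_lt_coe_iff (by positivity), one_div] at hk
  rw [← Real.rpow_natCast]
  exact ((Real.rpow_inv_lt_iff_of_pos (norm_nonneg _) r.2 (by positivity)).mp hk).le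

lemma norm_lt_one_of_tendsto_pow {𝕜 : Type*} [NormedField 𝕜] [NormedAlgebra 𝕜 A] {a : A}
    (h : Tendsto (a ^ ·) atTop (𝓝 0)) {μ : 𝕜} (hμ : μ ∈ spectrum 𝕜 a) : ‖μ‖ < 1 := by
  by_contra! hμ₁
  have hlim : Tendsto (fun k ↦ ‖a ^ k‖ * ‖(1 : A)‖) atTop (𝓝 0) := by
    simpa using (tendsto_zero_iff_norm_tendsto_zero.mp h).mul_const ‖(1 : A)‖
  have : (1 : ℝ) ≤ 0 := ge_of_tendsto' hlim fun k ↦ by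
    grw [one_le_pow₀ hμ₁, ← norm_pow, norm_le_norm_mul_of_mem (pow_mem_pow a k hμ)]
  linarith

end spectrum

namespace Matrix

variable {ι : Type*} [Fintype ι] [DecidableEq ι]

lemma norm_le_norm_map_algebraMap (M : Matrix ι ι ℝ) : ‖M‖ ≤ ‖M.map (algebraMap ℝ ℂ)‖ := by
  have hnorm (y : EuclideanSpace ℝ ι) :
      ‖(WithLp.toLp 2 fun i ↦ (y i : ℂ) : EuclideanSpace ℂ ι)‖ = ‖y‖ := by
    simp [EuclideanSpace.norm_eq]
  rw [cstar_norm_def, cstar_norm_def]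
  refine ContinuousLinearMap.opNorm_le_bound _ (norm_nonneg _) fun x ↦ ?_
  set xℂ : EuclideanSpace ℂ ι := WithLp.toLp 2 fun i ↦ (x i : ℂ)
  calc ‖toEuclideanCLM (𝕜 := ℝ) M x‖ = ‖toEuclideanCLM (𝕜 := ℂ) (M.map (algebraMap ℝ ℂ)) xℂ‖ := by
        rw [← hnorm]
        congr 1
        ext i
        simpa [Function.comp_def] using RingHom.map_mulVec (algebraMap ℝ ℂ) M x i
    _ ≤ _ := by grw [ContinuousLinearMap.le_opNorm, hnorm]

end Matrix

section StableMatrix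

variable {n : ℕ}

lemma IsStable.summable_norm_pow_sq {M : Matrix (Fin n) (Fin n) ℝ} (hM : IsStable M) :
    Summable fun k ↦ ‖M ^ k‖ ^ 2 := by
  cases isEmpty_or_nonempty (Fin n)
  · simp [Subsingleton.elim _ (0 : Matrix (Fin n) (Fin n) ℝ)]
  set a := M.map (algebraMap ℝ ℂ)
  have hρ : spectralRadius ℂ a < (1 : ℝ≥0) :=
    spectrum.spectralRadius_lt_of_forall_lt a fun μ hμ ↦ by exact_mod_cast hM μ hμ
  obtain ⟨r, hr, hr₁⟩ := ENNReal.lt_iff_exists_nnreal_btwn.mp hρ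
  have hr₁' : (r : ℝ) ^ 2 < 1 := pow_lt_one₀ r.2 (by exact_mod_cast hr₁) two_ne_zero
  refine .of_norm_bounded_eventually_nat (summable_geometric_of_lt_one (by positivity) hr₁') ?_
  filter_upwards [spectrum.eventually_norm_pow_le_of_spectralRadius_lt hr] with k hk
  have hMk : ‖M ^ k‖ ≤ (r : ℝ) ^ k := by
    grw [Matrix.norm_le_norm_map_algebraMap, Matrix.map_pow]
    exact hk
  rw [norm_pow, norm_norm, ← pow_mul, mul_comm, pow_mul]
  gcongr

lemma isStable_of_tendsto_pow {M : Matrix (Fin n) (Fin n) ℝ}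
    (h : Tendsto (M ^ ·) atTop (𝓝 0)) : IsStable M := by
  refine fun μ hμ ↦ spectrum.norm_lt_one_of_tendsto_pow ?_ hμ
  have hcont : Continuous fun X : Matrix (Fin n) (Fin n) ℝ ↦ X.map (algebraMap ℝ ℂ) :=
    continuous_id.matrix_map (continuous_algebraMap ℝ ℂ)
  have hpow : (M.map (algebraMap ℝ ℂ) ^ ·) = (fun X ↦ X.map (algebraMap ℝ ℂ)) ∘ (M ^ ·) :=
    funext fun k ↦ (Matrix.map_pow M _ k).symm
  rw [hpow]
  simpa only [Matrix.map_zero _ (map_zero _)] using (hcont.tendsto 0).comp h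

lemma isStable_iff_summable_norm_pow_sq (M : Matrix (Fin n) (Fin n) ℝ) :
    IsStable M ↔ Summable fun k ↦ ‖M ^ k‖ ^ 2 := by
  refine ⟨IsStable.summable_norm_pow_sq, fun h ↦ isStable_of_tendsto_pow ?_⟩
  rw [tendsto_zero_iff_norm_tendsto_zero]
  simpa using h.tendsto_atTop_zero.sqrt

lemma dlyap_eq_lyapunovSum (M : Matrix (Fin n) (Fin n) ℝ) : dlyap M = lyapunovSum M 1 := by
  simp [dlyap, lyapunovSum, Matrix.star_eq_conjTranspose]

lemma toEuclideanCLM_dlyap {M : Matrix (Fin n) (Fin n) ℝ} (hM : Summable fun k ↦ ‖M ^ k‖ ^ 2) :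
    toEuclideanCLM (𝕜 := ℝ) (dlyap M) = lyapunovSum (toEuclideanCLM (𝕜 := ℝ) M) 1 := by
  rw [dlyap_eq_lyapunovSum, map_lyapunovSum _ ?_ hM, map_one]
  exact (AddMonoidHomClass.isometry_of_norm _ fun _ ↦ rfl).continuous

lemma spNorm_eq_norm_toEuclideanCLM (M : Matrix (Fin n) (Fin n) ℝ) :
    spNorm M = ‖toEuclideanCLM (𝕜 := ℝ) M‖ := rfl

lemma norm_toEuclideanCLM_pow (M : Matrix (Fin n) (Fin n) ℝ) (k : ℕ) :
    ‖toEuclideanCLM (𝕜 := ℝ) M ^ k‖ = ‖M ^ k‖ := by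
  rw [← map_pow]; rfl

end StableMatrix

/-- perturbation bound for the discrete Lyapunov equation. -/
theorem dlyap_perturbation {n : ℕ} (A A' : Matrix (Fin n) (Fin n) ℝ)
    (hA : IsStable A)
    (hpert : spNorm (A' - A) ≤ 1 / (4 * spNorm (dlyap A) * (1 + spNorm A))) :
    IsStable A' ∧
    spNorm (dlyap A' - dlyap A) ≤
      4 * (spNorm (dlyap A)) ^ 2 * (1 + spNorm A) * spNorm (A' - A) := by
  have hA₂ := (isStable_iff_summable_norm_pow_sq A).mp hA
  have hT : Summable fun k ↦ ‖toEuclideanCLM (𝕜 := ℝ) A ^ k‖ ^ 2 := by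
    simpa only [norm_toEuclideanCLM_pow] using hA₂
  simp only [spNorm_eq_norm_toEuclideanCLM, map_sub, toEuclideanCLM_dlyap hA₂] at hpert ⊢
  obtain ⟨hT', hbound⟩ := ContinuousLinearMap.lyapunovSum_perturbation hT hpert
  have hA'₂ : Summable fun k ↦ ‖A' ^ k‖ ^ 2 := by
    simpa only [norm_toEuclideanCLM_pow] using hT'
  rw [toEuclideanCLM_dlyap hA'₂]
  exact ⟨(isStable_iff_summable_norm_pow_sq A').mpr hA'₂, hbound⟩
end

section
/- State bound under sequential stability: let {K_t}_{t ≥ t_0} be a sequence of gains that is sequentially stable with parameters (κ, α), and let the state evolve as x_{t+1} = (A + BK_t)x_t + Be_t + w_t for arbitrary sequences e_t ∈ ℝ^m, w_t ∈ ℝ^n. Then for every t > t_0, ‖x_t‖ ≤ κ(1 − α/2)^{t−t_0}‖x_{t_0}‖ + (2κ/α) max_{t_0 ≤ i < t} ‖Be_i + w_i‖. -/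
open Matrix

/-!
In the coordinates `zₜ = Hₜ⁻¹ xₜ` the closed loop acts by `Lₜ`, so
`‖z_{t+1}‖ ≤ ‖H_{t+1}⁻¹ Hₜ‖ ‖Lₜ‖ ‖zₜ‖ + ‖H_{t+1}⁻¹‖ ‖B eₜ + wₜ‖
  ≤ (1 + α/2)(1 - α) ‖zₜ‖ + ‖B eₜ + wₜ‖ ≤ (1 - α/2) ‖zₜ‖ + ‖B eₜ + wₜ‖`.
Unrolling this scalar recursion gives the geometric decay plus the forcing term summed as a
geometric series, `∑ (1 - α/2)^k = 2/α`; returning to `xₜ = Hₜ zₜ` costs the factor `‖Hₜ‖ ≤ κ`,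
while `‖z_{t₀}‖ ≤ ‖x_{t₀}‖` since `‖H_{t₀}⁻¹‖ ≤ 1`.
-/

section VecNorm

variable {ι ι' : Type*} [Fintype ι] [Fintype ι'] [DecidableEq ι']

lemma vecNorm_eq_norm_toLp (v : ι → ℝ) : vecNorm v = ‖WithLp.toLp 2 v‖ := by
  simp [vecNorm, EuclideanSpace.norm_eq, Real.norm_eq_abs, sq_abs]

lemma vecNorm_nonneg (v : ι → ℝ) : 0 ≤ vecNorm v :=
  Real.sqrt_nonneg _

lemma spNorm_nonneg (M : Matrix ι ι' ℝ) : 0 ≤ spNorm M :=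
  norm_nonneg _

lemma vecNorm_add_le (u v : ι → ℝ) : vecNorm (u + v) ≤ vecNorm u + vecNorm v := by
  simpa only [vecNorm_eq_norm_toLp, WithLp.toLp_add] using norm_add_le _ _

lemma vecNorm_mulVec_le (M : Matrix ι ι' ℝ) (v : ι' → ℝ) :
    vecNorm (M *ᵥ v) ≤ spNorm M * vecNorm v := by
  rw [vecNorm_eq_norm_toLp, vecNorm_eq_norm_toLp]
  exact (LinearMap.toContinuousLinearMap (toEuclideanLin M)).le_opNorm (WithLp.toLp 2 v)

lemma vecNorm_mulVec_le_of_spNorm_le {M : Matrix ι ι' ℝ} {c : ℝ} (hM : spNorm M ≤ c)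
    (v : ι' → ℝ) : vecNorm (M *ᵥ v) ≤ c * vecNorm v :=
  (vecNorm_mulVec_le M v).trans (mul_le_mul_of_nonneg_right hM (vecNorm_nonneg v))

end VecNorm

lemma vecNorm_le_spNorm_mul_vecNorm_inv_mulVec {ι : Type*} [Fintype ι] [DecidableEq ι]
    {H : Matrix ι ι ℝ} (hH : IsUnit H.det) (x : ι → ℝ) :
    vecNorm x ≤ spNorm H * vecNorm (H⁻¹ *ᵥ x) := by
  simpa only [mulVec_mulVec, mul_nonsing_inv H hH, one_mulVec] using
    vecNorm_mulVec_le H (H⁻¹ *ᵥ x)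

lemma vecNorm_inv_mulVec_conj_add_le {ι : Type*} [Fintype ι] [DecidableEq ι]
    {H H' L : Matrix ι ι ℝ} {α : ℝ} (hL : spNorm L ≤ 1 - α)
    (hH'H : spNorm (H'⁻¹ * H) ≤ 1 + α / 2) (hH' : spNorm H'⁻¹ ≤ 1) (x d : ι → ℝ) :
    vecNorm (H'⁻¹ *ᵥ ((H * L * H⁻¹) *ᵥ x + d)) ≤ (1 - α / 2) * vecNorm (H⁻¹ *ᵥ x) + vecNorm d := by
  have hsplit : H'⁻¹ *ᵥ ((H * L * H⁻¹) *ᵥ x + d) =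
      (H'⁻¹ * H) *ᵥ (L *ᵥ (H⁻¹ *ᵥ x)) + H'⁻¹ *ᵥ d := by
    simp only [mulVec_add, mulVec_mulVec, Matrix.mul_assoc]
  have hz := vecNorm_nonneg (H⁻¹ *ᵥ x)
  have hα : (1 + α / 2) * (1 - α) ≤ 1 - α / 2 := by nlinarith [sq_nonneg α]
  rw [hsplit]
  calc _ ≤ vecNorm ((H'⁻¹ * H) *ᵥ (L *ᵥ (H⁻¹ *ᵥ x))) + vecNorm (H'⁻¹ *ᵥ d) := vecNorm_add_le _ _
    _ ≤ (1 + α / 2) * ((1 - α) * vecNorm (H⁻¹ *ᵥ x)) + 1 * vecNorm d := by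
        gcongr
        · exact (vecNorm_mulVec_le_of_spNorm_le hH'H _).trans <| by
            gcongr
            · exact (spNorm_nonneg _).trans hH'H
            · exact vecNorm_mulVec_le_of_spNorm_le hL _
        · exact vecNorm_mulVec_le_of_spNorm_le hH' _
    _ ≤ (1 - α / 2) * vecNorm (H⁻¹ *ᵥ x) + vecNorm d := by
        nlinarith [mul_le_mul_of_nonneg_right hα hz]

lemma le_pow_mul_add_div_one_sub_of_le_mul_add {z f : ℕ → ℝ} {β M : ℝ} {t0 : ℕ}
    (hβ0 : 0 ≤ β) (hβ1 : β < 1) (hM : 0 ≤ M)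
    (hstep : ∀ s, t0 ≤ s → z (s + 1) ≤ β * z s + f s) :
    ∀ t, t0 ≤ t → (∀ i ∈ Finset.Ico t0 t, f i ≤ M) →
      z t ≤ β ^ (t - t0) * z t0 + M / (1 - β) := by
  have hgeom : β * (M / (1 - β)) + M = M / (1 - β) := by
    field_simp [(sub_pos.mpr hβ1).ne']
    ring
  intro t ht
  induction t, ht using Nat.le_induction with
  | base => simpa using div_nonneg hM (sub_pos.mpr hβ1).le
  | succ s hs ih =>
    intro hf
    have ih' := ih fun i hi => hf i (Finset.Ico_subset_Ico_right s.le_succ hi)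
    have hfs : f s ≤ M := hf s (Finset.mem_Ico.mpr ⟨hs, s.lt_succ_self⟩)
    calc z (s + 1) ≤ β * z s + f s := hstep s hs
      _ ≤ β * (β ^ (s - t0) * z t0 + M / (1 - β)) + M := by gcongr
      _ = β ^ (s + 1 - t0) * z t0 + M / (1 - β) := by
        rw [Nat.sub_add_comm hs, pow_succ]
        linear_combination hgeom

/-- state bound under sequential stability. -/
theorem state_bound_of_seq_stable {n m : ℕ}
    (A : Matrix (Fin n) (Fin n) ℝ) (B : Matrix (Fin n) (Fin m) ℝ)
    (t0 : ℕ) (K : ℕ → Matrix (Fin m) (Fin n) ℝ) (κ α : ℝ)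
    (hseq : SeqStable A B K t0 κ α)
    (x : ℕ → Fin n → ℝ) (e : ℕ → Fin m → ℝ) (w : ℕ → Fin n → ℝ)
    (hdyn : ∀ t, t0 ≤ t →
      x (t + 1) = (A + B * K t).mulVec (x t) + B.mulVec (e t) + w t) :
    ∀ t, (ht : t0 < t) →
      vecNorm (x t) ≤ κ * (1 - α / 2) ^ (t - t0) * vecNorm (x t0) +
        (2 * κ / α) * (Finset.Ico t0 t).sup' (Finset.nonempty_Ico.mpr ht)
          (fun i => vecNorm (B.mulVec (e i) + w i)) := by
  obtain ⟨hκ, hα, hα1, H, L, hH⟩ := hseq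
  set z : ℕ → ℝ := fun t => vecNorm ((H t)⁻¹ *ᵥ x t)
  set f : ℕ → ℝ := fun i => vecNorm (B *ᵥ e i + w i)
  have hstep : ∀ s, t0 ≤ s → z (s + 1) ≤ (1 - α / 2) * z s + f s := by
    intro s hs
    obtain ⟨-, hconj, hL, -, -, -, hHH⟩ := hH s hs
    obtain ⟨-, -, -, -, -, hHinv, -⟩ := hH (s + 1) (hs.trans s.le_succ)
    simpa only [z, f, hdyn s hs, hconj, add_assoc] using
      vecNorm_inv_mulVec_conj_add_le hL hHH hHinv (x s) (B *ᵥ e s + w s)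
  intro t ht
  obtain ⟨hPD, -, -, -, hHt, -, -⟩ := hH t ht.le
  obtain ⟨-, -, -, -, -, hH0inv, -⟩ := hH t0 le_rfl
  set S := (Finset.Ico t0 t).sup' (Finset.nonempty_Ico.mpr ht) f
  have hS : 0 ≤ S := (vecNorm_nonneg _).trans (Finset.le_sup' f (Finset.left_mem_Ico.mpr ht))
  have hzt := le_pow_mul_add_div_one_sub_of_le_mul_add (by linarith) (by linarith) hS hstep
    t ht.le fun i hi => Finset.le_sup' f hi
  have hz0 : z t0 ≤ vecNorm (x t0) := by
    simpa using vecNorm_mulVec_le_of_spNorm_le hH0inv (x t0)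
  have hβ : 0 ≤ 1 - α / 2 := by linarith
  calc vecNorm (x t) ≤ spNorm (H t) * z t :=
        vecNorm_le_spNorm_mul_vecNorm_inv_mulVec hPD.det_pos.ne'.isUnit (x t)
    _ ≤ κ * z t := mul_le_mul_of_nonneg_right hHt (vecNorm_nonneg _)
    _ ≤ κ * ((1 - α / 2) ^ (t - t0) * vecNorm (x t0) + S / (1 - (1 - α / 2))) := by
        gcongr
        exact hzt.trans (by gcongr)
    _ = κ * (1 - α / 2) ^ (t - t0) * vecNorm (x t0) + (2 * κ / α) * S := by
        rw [sub_sub_cancel]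
        field_simp
end

section
/- Natural gradient bridges direct and indirect parameterizations (core identity): let Ū₀ ∈ ℝ^{m×(m+n)} and X̄₀ ∈ ℝ^{n×(m+n)} be such that the stacked matrix [Ū₀; X̄₀] is invertible, let O ∈ ℝ^{(m+n)×m} be a matrix whose columns form an orthonormal basis of the nullspace of X̄₀, and let F ∈ ℝ^{mn×mn} be positive definite. Then Ū₀O ∈ ℝ^{m×m} is invertible, the matrix (O ⊗ I_n)ᵀ(Ū₀ ⊗ I_n)ᵀF(Ū₀ ⊗ I_n)(O ⊗ I_n) is invertible, and for every g ∈ ℝ^{mn}: (Ū₀ ⊗ I_n)(O ⊗ I_n)[(O ⊗ I_n)ᵀ(Ū₀ ⊗ I_n)ᵀF(Ū₀ ⊗ I_n)(O ⊗ I_n)]^{-1}(O ⊗ I_n)ᵀ(Ū₀ ⊗ I_n)ᵀ g = F^{-1} g. Consequently, if ψ' = ψ − ηΔψ with Δψ = (O ⊗ I_n)[(O ⊗ I_n)ᵀF_ψ(O ⊗ I_n)]^{-1}(O ⊗ I_n)ᵀ(Ū₀ ⊗ I_n)ᵀ g and F_ψ = (Ū₀ ⊗ I_n)ᵀF(Ū₀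 ⊗ I_n), then θ' := (Ū₀ ⊗ I_n)ψ' satisfies θ' = (Ū₀ ⊗ I_n)ψ − ηF^{-1}g, i.e. the restricted natural gradient step in the lifted parameter ψ induces exactly the natural gradient step θ' = θ − ηF^{-1}g in the original parameter θ. -/
open Matrix

open Kronecker

/-- the restricted natural gradient step in the lifted (covariance)
parameter induces exactly the natural gradient step in the original parameter. -/
theorem natural_gradient_bridge {n m : ℕ}
    (U0 : Matrix (Fin m) (Fin m ⊕ Fin n) ℝ) (X0 : Matrix (Fin n) (Fin m ⊕ Fin n) ℝ)
    (hstack : IsUnit (fromRows U0 X0))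
    (O : Matrix (Fin m ⊕ Fin n) (Fin m) ℝ)
    (hortho : Oᵀ * O = 1) (hker : X0 * O = 0)
    (hspan : ∀ v : (Fin m ⊕ Fin n) → ℝ, X0.mulVec v = 0 → ∃ c : Fin m → ℝ, v = O.mulVec c)
    (F : Matrix (Fin m × Fin n) (Fin m × Fin n) ℝ) (hF : F.PosDef)
    (UI : Matrix (Fin m × Fin n) ((Fin m ⊕ Fin n) × Fin n) ℝ)
    (hUI : UI = U0 ⊗ₖ (1 : Matrix (Fin n) (Fin n) ℝ))
    (OI : Matrix ((Fin m ⊕ Fin n) × Fin n) (Fin m × Fin n) ℝ)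
    (hOI : OI = O ⊗ₖ (1 : Matrix (Fin n) (Fin n) ℝ)) :
    IsUnit (U0 * O) ∧
    IsUnit (OIᵀ * UIᵀ * F * UI * OI) ∧
    (∀ g : Fin m × Fin n → ℝ,
      (UI * OI * (OIᵀ * UIᵀ * F * UI * OI)⁻¹ * OIᵀ * UIᵀ).mulVec g = F⁻¹.mulVec g) ∧
    (∀ (η : ℝ) (ψ : (Fin m ⊕ Fin n) × Fin n → ℝ) (g : Fin m × Fin n → ℝ)
      (Δψ : (Fin m ⊕ Fin n) × Fin n → ℝ),
      Δψ = (OI * (OIᵀ * (UIᵀ * F * UI) * OI)⁻¹ * OIᵀ * UIᵀ).mulVec g →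
      UI.mulVec (ψ - η • Δψ) = UI.mulVec ψ - η • F⁻¹.mulVec g) := by
  -- Part 1: U0 * O is invertible
  have h1 : IsUnit (U0 * O) := by
    rw [Matrix.isUnit_iff_isUnit_det, isUnit_iff_ne_zero]
    intro hdet
    obtain ⟨v, hv, hv0⟩ := (Matrix.exists_mulVec_eq_zero_iff).mpr hdet
    apply hv
    set w : (Fin m ⊕ Fin n) → ℝ := O.mulVec v with hw
    have hU0w : U0.mulVec w = 0 := by
      rw [hw, Matrix.mulVec_mulVec, hv0]
    have hX0w : X0.mulVec w = 0 := by
      rw [hw, Matrix.mulVec_mulVec, hker, Matrix.zero_mulVec]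
    have hsw : (fromRows U0 X0).mulVec w = 0 := by
      rw [Matrix.fromRows_mulVec, hU0w, hX0w]
      ext (i | i) <;> simp
    have hwz : w = 0 := by
      have hinv := Matrix.nonsing_inv_mul _ ((Matrix.isUnit_iff_isUnit_det (fromRows U0 X0)).mp hstack)
      calc w = ((fromRows U0 X0)⁻¹ * fromRows U0 X0).mulVec w := by
                rw [hinv, Matrix.one_mulVec]
        _ = (fromRows U0 X0)⁻¹.mulVec ((fromRows U0 X0).mulVec w) := by
                rw [← Matrix.mulVec_mulVec]
        _ = 0 := by rw [hsw, Matrix.mulVec_zero]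
    calc v = (Oᵀ * O).mulVec v := by rw [hortho, Matrix.one_mulVec]
      _ = Oᵀ.mulVec w := by rw [← Matrix.mulVec_mulVec]
      _ = 0 := by rw [hwz, Matrix.mulVec_zero]
  -- B := UI * OI is (U0*O) ⊗ 1, hence invertible
  have hB : UI * OI = (U0 * O) ⊗ₖ (1 : Matrix (Fin n) (Fin n) ℝ) := by
    rw [hUI, hOI, ← Matrix.mul_kronecker_mul, Matrix.one_mul]
  have hBdet : IsUnit (UI * OI).det := by
    rw [hB, Matrix.det_kronecker, Matrix.det_one, one_pow, mul_one]
    exact ((Matrix.isUnit_iff_isUnit_det _).mp h1).pow _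
  have hFdet : IsUnit F.det := isUnit_iff_ne_zero.mpr (ne_of_gt hF.det_pos)
  -- The middle matrix equals Bᵀ * F * B
  have hmid : OIᵀ * UIᵀ * F * UI * OI = (UI * OI)ᵀ * F * (UI * OI) := by
    rw [Matrix.transpose_mul]
    simp only [Matrix.mul_assoc]
  have hmiddet : IsUnit ((UI * OI)ᵀ * F * (UI * OI)).det := by
    rw [Matrix.det_mul, Matrix.det_mul, Matrix.det_transpose]
    exact (hBdet.mul hFdet).mul hBdet
  have h2 : IsUnit (OIᵀ * UIᵀ * F * UI * OI) := by
    rw [hmid, Matrix.isUnit_iff_isUnit_det]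
    exact hmiddet
  -- Key matrix identity
  have hkey : UI * OI * (OIᵀ * UIᵀ * F * UI * OI)⁻¹ * OIᵀ * UIᵀ = F⁻¹ := by
    have h3 : UI * OI * (OIᵀ * UIᵀ * F * UI * OI)⁻¹ * OIᵀ * UIᵀ
        = (UI * OI) * ((UI * OI)ᵀ * F * (UI * OI))⁻¹ * (UI * OI)ᵀ := by
      rw [hmid, Matrix.transpose_mul]
      simp only [Matrix.mul_assoc]
    rw [h3, Matrix.mul_inv_rev, Matrix.mul_inv_rev, ← Matrix.transpose_nonsing_inv]
    calc (UI * OI) * ((UI * OI)⁻¹ * (F⁻¹ * ((UI * OI)⁻¹)ᵀ)) * (UI * OI)ᵀ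
        = (UI * OI) * (UI * OI)⁻¹ * F⁻¹ * (((UI * OI)⁻¹)ᵀ * (UI * OI)ᵀ) := by
          simp only [Matrix.mul_assoc]
      _ = F⁻¹ := by
          rw [Matrix.mul_nonsing_inv _ hBdet, ← Matrix.transpose_mul,
            Matrix.mul_nonsing_inv _ hBdet, Matrix.transpose_one, Matrix.one_mul,
            Matrix.mul_one]
  refine ⟨h1, h2, fun g => by rw [hkey], ?_⟩
  intro η ψ g Δψ hΔψ
  have hassoc : OIᵀ * (UIᵀ * F * UI) * OI = OIᵀ * UIᵀ * F * UI * OI := by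
    simp only [Matrix.mul_assoc]
  have h4 : UI.mulVec Δψ = F⁻¹.mulVec g := by
    rw [hΔψ, Matrix.mulVec_mulVec, ← hkey, hassoc]
    simp only [Matrix.mul_assoc]
  rw [Matrix.mulVec_sub, Matrix.mulVec_smul, h4]
end
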